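/- The function x ↦ B'(x) + (1/2)·|x₃|·e^{−π(x₂²−x₃²)} is twice continuously differentiable (C²) on the complement of the light-cone, i.e. on the open set {x∈ℝ² : x₂² ≠ x₃²}, and the function x ↦ A'(x) + (1/2)·x₂·sgn(x₃)·e^{−π(x₂²−x₃²)} is continuously differentiable (C¹) on {x∈ℝ² : x₂² ≠ x₃²}. (Paper Lemma 5.8.) -/
import Mathlib


open MeasureTheory

/-- The `e₃`-component `B'` of the singular function `ψ̃'₀,₁` on the Minkowski plane. -/
noncomputable def B' (x : ℝ × ℝ) : ℝ :=
  if x.1 ^ 2 - x.2 ^ 2 > 0 then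
    (1/2) * min |x.1 - x.2| |x.1 + x.2| * Real.exp (-(Real.pi * (x.1 ^ 2 - x.2 ^ 2)))
  else 0

/-- The `e₂`-component `A'` of the singular function `ψ̃'₀,₁`. -/
noncomputable def A' (x : ℝ × ℝ) : ℝ := - Real.sign (x.1 * x.2) * B' x

lemma min_abs_eq (a b : ℝ) (h : |b| < |a|) : min |a - b| |a + b| = |a| - |b| := by
  rcases le_or_gt 0 a with ha | ha
  · rw [abs_of_nonneg ha] at h ⊢
    rcases le_or_gt 0 b with hb | hb
    · rw [abs_of_nonneg hb] at h ⊢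
      rw [abs_of_nonneg (by linarith), abs_of_nonneg (by linarith), min_eq_left (by linarith)]
    · rw [abs_of_neg hb] at h ⊢
      rw [abs_of_nonneg (by linarith), abs_of_nonneg (by linarith), min_eq_right (by linarith)]
      ring
  · rw [abs_of_neg ha] at h ⊢
    rcases le_or_gt 0 b with hb | hb
    · rw [abs_of_nonneg hb] at h ⊢
      rw [abs_of_neg (by linarith), abs_of_neg (by linarith), min_eq_right (by linarith)]
      ring
    · rw [abs_of_neg hb] at h ⊢
      rw [abs_of_neg (by linarith), abs_of_neg (by linarith), min_eq_left (by linarith)]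
      ring

lemma abs_lt_abs_of_sq (a b : ℝ) (h : b ^ 2 < a ^ 2) : |b| < |a| := by
  nlinarith [sq_abs a, sq_abs b, abs_nonneg a, abs_nonneg b]

lemma B'_eq_pos {y : ℝ × ℝ} (hq : 0 < y.1 ^ 2 - y.2 ^ 2) :
    B' y = (1/2) * (|y.1| - |y.2|) * Real.exp (-(Real.pi * (y.1 ^ 2 - y.2 ^ 2))) := by
  rw [B', if_pos hq, min_abs_eq _ _ (abs_lt_abs_of_sq _ _ (by linarith))]

lemma B'_eq_neg {y : ℝ × ℝ} (hq : y.1 ^ 2 - y.2 ^ 2 < 0) : B' y = 0 := by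
  rw [B', if_neg (by linarith)]

lemma smoothE : ContDiff ℝ (⊤ : ℕ∞) (fun y : ℝ × ℝ => Real.exp (-(Real.pi * (y.1 ^ 2 - y.2 ^ 2)))) := by
  have h : ContDiff ℝ (⊤ : ℕ∞) (fun y : ℝ × ℝ => -(Real.pi * (y.1 ^ 2 - y.2 ^ 2))) := by fun_prop
  exact Real.contDiff_exp.comp h

lemma contDiffAt_congr_on_open {f g : ℝ × ℝ → ℝ} {U : Set (ℝ × ℝ)} {x : ℝ × ℝ} {n : ℕ∞}
    (hU : IsOpen U) (hx : x ∈ U) (hfg : ∀ y ∈ U, f y = g y)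
    (hg : ContDiffAt ℝ n g x) : ContDiffAt ℝ n f x :=
  hg.congr_of_eventuallyEq (Filter.eventuallyEq_of_mem (hU.mem_nhds hx) hfg)

/-- Paper Lemma 5.8: `B'(x) + (1/2)|x₃|e^{-π(x₂²-x₃²)}` is `C²` and
`A'(x) + (1/2)x₂·sgn(x₃)·e^{-π(x₂²-x₃²)}` is `C¹` on the complement of the
light-cone `{x : x₂² ≠ x₃²}`. -/
theorem stmt4 :
    ContDiffOn ℝ 2 (fun x : ℝ × ℝ =>
      B' x + (1/2) * |x.2| * Real.exp (-(Real.pi * (x.1 ^ 2 - x.2 ^ 2))))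
      {x : ℝ × ℝ | x.1 ^ 2 ≠ x.2 ^ 2} ∧
    ContDiffOn ℝ 1 (fun x : ℝ × ℝ =>
      A' x + (1/2) * x.1 * Real.sign x.2 * Real.exp (-(Real.pi * (x.1 ^ 2 - x.2 ^ 2))))
      {x : ℝ × ℝ | x.1 ^ 2 ≠ x.2 ^ 2} := by
  have hq_open : IsOpen {y : ℝ × ℝ | 0 < y.1 ^ 2 - y.2 ^ 2} :=
    isOpen_lt continuous_const (by fun_prop)
  have hq_open' : IsOpen {y : ℝ × ℝ | y.1 ^ 2 - y.2 ^ 2 < 0} :=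
    isOpen_lt (by fun_prop) continuous_const
  have h1pos : IsOpen {y : ℝ × ℝ | 0 < y.1} := isOpen_lt continuous_const (by fun_prop)
  have h1neg : IsOpen {y : ℝ × ℝ | y.1 < 0} := isOpen_lt (by fun_prop) continuous_const
  have h2pos : IsOpen {y : ℝ × ℝ | 0 < y.2} := isOpen_lt continuous_const (by fun_prop)
  have h2neg : IsOpen {y : ℝ × ℝ | y.2 < 0} := isOpen_lt (by fun_prop) continuous_const
  have hg1 : ∀ (c : ℝ) (x : ℝ × ℝ) (n : ℕ∞), ContDiffAt ℝ n
      (fun y : ℝ × ℝ => c * y.1 * Real.exp (-(Real.pi * (y.1 ^ 2 - y.2 ^ 2)))) x :=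
    fun c x n => (((contDiff_const.mul contDiff_fst).mul (smoothE.of_le (mod_cast le_top))).contDiffAt)
  have hg2 : ∀ (c : ℝ) (x : ℝ × ℝ) (n : ℕ∞), ContDiffAt ℝ n
      (fun y : ℝ × ℝ => c * y.2 * Real.exp (-(Real.pi * (y.1 ^ 2 - y.2 ^ 2)))) x :=
    fun c x n => (((contDiff_const.mul contDiff_snd).mul (smoothE.of_le (mod_cast le_top))).contDiffAt)
  constructor
  · intro x hx
    apply ContDiffAt.contDiffWithinAt
    have hx' : x.1 ^ 2 ≠ x.2 ^ 2 := hx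
    rcases lt_or_gt_of_ne hx' with hlt | hgt
    · -- q < 0, so x.2 ≠ 0
      have h2 : x.2 ≠ 0 := by
        intro h; rw [h] at hlt; nlinarith [sq_nonneg x.1]
      rcases h2.lt_or_gt with hneg | hpos
      · refine contDiffAt_congr_on_open (hq_open'.and h2neg) ⟨by simpa using hlt, hneg⟩
          (g := fun y => (-1/2) * y.2 * Real.exp (-(Real.pi * (y.1 ^ 2 - y.2 ^ 2))))
          (fun y hy => ?_) (hg2 _ _ _)
        rw [B'_eq_neg hy.1, abs_of_neg hy.2]; ring
      · refine contDiffAt_congr_on_open (hq_open'.and h2pos) ⟨by simpa using hlt, hpos⟩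
          (g := fun y => (1/2) * y.2 * Real.exp (-(Real.pi * (y.1 ^ 2 - y.2 ^ 2))))
          (fun y hy => ?_) (hg2 _ _ _)
        rw [B'_eq_neg hy.1, abs_of_pos hy.2]; ring
    · -- q > 0, so x.1 ≠ 0
      have h1 : x.1 ≠ 0 := by
        intro h; rw [h] at hgt; nlinarith [sq_nonneg x.2]
      rcases h1.lt_or_gt with hneg | hpos
      · refine contDiffAt_congr_on_open (hq_open.and h1neg) ⟨by simpa using hgt, hneg⟩
          (g := fun y => (-1/2) * y.1 * Real.exp (-(Real.pi * (y.1 ^ 2 - y.2 ^ 2))))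
          (fun y hy => ?_) (hg1 _ _ _)
        rw [B'_eq_pos hy.1, abs_of_neg hy.2]; ring
      · refine contDiffAt_congr_on_open (hq_open.and h1pos) ⟨by simpa using hgt, hpos⟩
          (g := fun y => (1/2) * y.1 * Real.exp (-(Real.pi * (y.1 ^ 2 - y.2 ^ 2))))
          (fun y hy => ?_) (hg1 _ _ _)
        rw [B'_eq_pos hy.1, abs_of_pos hy.2]; ring
  · intro x hx
    apply ContDiffAt.contDiffWithinAt
    have hx' : x.1 ^ 2 ≠ x.2 ^ 2 := hx
    rcases lt_or_gt_of_ne hx' with hlt | hgt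
    · have h2 : x.2 ≠ 0 := by
        intro h; rw [h] at hlt; nlinarith [sq_nonneg x.1]
      rcases h2.lt_or_gt with hneg | hpos
      · refine contDiffAt_congr_on_open (hq_open'.and h2neg) ⟨by simpa using hlt, hneg⟩
          (g := fun y => (-1/2) * y.1 * Real.exp (-(Real.pi * (y.1 ^ 2 - y.2 ^ 2))))
          (fun y hy => ?_) (hg1 _ _ _)
        rw [A', B'_eq_neg hy.1, Real.sign_of_neg hy.2]; ring
      · refine contDiffAt_congr_on_open (hq_open'.and h2pos) ⟨by simpa using hlt, hpos⟩
          (g := fun y => (1/2) * y.1 * Real.exp (-(Real.pi * (y.1 ^ 2 - y.2 ^ 2))))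
          (fun y hy => ?_) (hg1 _ _ _)
        rw [A', B'_eq_neg hy.1, Real.sign_of_pos hy.2]; ring
    · have h1 : x.1 ≠ 0 := by
        intro h; rw [h] at hgt; nlinarith [sq_nonneg x.2]
      rcases h1.lt_or_gt with hneg | hpos
      · refine contDiffAt_congr_on_open (hq_open.and h1neg) ⟨by simpa using hgt, hneg⟩
          (g := fun y => (-1/2) * y.2 * Real.exp (-(Real.pi * (y.1 ^ 2 - y.2 ^ 2))))
          (fun y hy => ?_) (hg2 _ _ _)
        rw [A', B'_eq_pos hy.1, abs_of_neg hy.2]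
        rcases lt_trichotomy y.2 0 with h2 | h2 | h2
        · rw [Real.sign_of_pos (mul_pos_of_neg_of_neg hy.2 h2), Real.sign_of_neg h2,
            abs_of_neg h2]; ring
        · simp [h2]
        · rw [Real.sign_of_neg (mul_neg_of_neg_of_pos hy.2 h2), Real.sign_of_pos h2,
            abs_of_pos h2]; ring
      · refine contDiffAt_congr_on_open (hq_open.and h1pos) ⟨by simpa using hgt, hpos⟩
          (g := fun y => (1/2) * y.2 * Real.exp (-(Real.pi * (y.1 ^ 2 - y.2 ^ 2))))
          (fun y hy => ?_) (hg2 _ _ _)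
        rw [A', B'_eq_pos hy.1, abs_of_pos hy.2]
        rcases lt_trichotomy y.2 0 with h2 | h2 | h2
        · rw [Real.sign_of_neg (mul_neg_of_pos_of_neg hy.2 h2), Real.sign_of_neg h2,
            abs_of_neg h2]; ring
        · simp [h2]
        · rw [Real.sign_of_pos (mul_pos hy.2 h2), Real.sign_of_pos h2, abs_of_pos h2]; ring
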